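/- Suppose M is uniformly continuous. If F^{−1}(Ω) is empty, then M is non-degenerate. -/

import Mathlib

open MeasureTheory Filter Topology
open scoped ENNReal NNReal Classical

noncomputable section

/-- A countable Markov system `(K_{i(e)}, w_e, p_e)_{e ∈ E}` on a metric space `K`:
a partition `(K_j)_{j ∈ N}` of `K` into nonempty Borel sets, source and target maps
`i, t : E → N` (`i` surjective), and for each `e ∈ E` Borel maps `w_e` and probability
functions `p_e` (extended by zero outside `K_{i(e)}`) with
`∑_{e, i(e)=j} p_e(y) = 1` for `y ∈ K_j`. -/
structure MarkovSystem (K : Type*) [MetricSpace K] [MeasurableSpace K]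
    (N : Type*) (E : Type*) where
  Kset : N → Set K
  Kset_nonempty : ∀ j, (Kset j).Nonempty
  Kset_measurable : ∀ j, MeasurableSet (Kset j)
  Kset_disjoint : Pairwise (Function.onFun Disjoint Kset)
  Kset_cover : (⋃ j, Kset j) = Set.univ
  i : E → N
  t : E → N
  i_surj : Function.Surjective i
  w : E → K → K
  p : E → K → ℝ
  w_measurable : ∀ e, Measurable (w e)
  p_measurable : ∀ e, Measurable (p e)
  p_nonneg : ∀ e x, 0 ≤ p e x
  p_le_one : ∀ e x, p e x ≤ 1
  p_zero_outside : ∀ e x, x ∉ Kset (i e) → p e x = 0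
  w_mapsTo : ∀ e, Set.MapsTo (w e) (Kset (i e)) (Kset (t e))
  p_pos_somewhere : ∀ e, ∃ x ∈ Kset (i e), 0 < p e x
  p_tsum_one : ∀ j, ∀ x ∈ Kset j, (∑' e : {e : E // i e = j}, p e.val x) = 1

/-- `Ē = E ∪ {∞}` (one-point compactification); with `E` countable its Borel σ-algebra
consists of all subsets. -/
instance optionMeasurableSpace (E : Type*) : MeasurableSpace (Option E) := ⊤

/-- The code space `Σ̄ = Ē^ℤ`, carrying the product σ-algebra. -/
abbrev CodeSpace (E : Type*) : Type _ := ℤ → Option E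

/-- The left shift `S` on the code space, `(Sσ)_{k-1} = σ_k`. -/
def shiftMap (E : Type*) : CodeSpace E → CodeSpace E := fun σ k => σ (k + 1)

/-- The cylinder set `_m[es₀, …, es_{n}] = {σ : σ_{m+k} = es_k}`. -/
def cylSetL {E : Type*} (m : ℤ) (es : List (Option E)) : Set (CodeSpace E) :=
  {σ | ∀ (k : ℕ) (h : k < es.length), σ (m + (k : ℤ)) = es.get ⟨k, h⟩}

/-- The σ-algebra `𝓕` generated by the cylinder sets `_m[e_m, …, e_0]`, `m ≤ 0`. -/
def pastAlgebra (E : Type*) : MeasurableSpace (CodeSpace E) :=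
  MeasurableSpace.generateFrom
    {A | ∃ es : List (Option E), es ≠ [] ∧ A = cylSetL (1 - (es.length : ℤ)) es}

/-- The conditional entropy `h_S(Λ) = H_Λ((_1[e])_{e ∈ Ē} | 𝓕)`. -/
def entropyS {E : Type*} (Λ : Measure (CodeSpace E)) : ℝ≥0∞ :=
  ∑' eo : Option E,
    ∫⁻ σ, ENNReal.ofReal
        (Real.negMulLog
          ((Λ[Set.indicator {τ : CodeSpace E | τ 1 = eo} (fun _ => (1 : ℝ)) | pastAlgebra E]) σ)) ∂Λ

namespace MarkovSystem

variable {K : Type*} [MetricSpace K] [MeasurableSpace K] {N E : Type*}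

/-- The Markov operator `Uf = ∑_e p_e · (f ∘ w_e)` acting on nonnegative Borel functions. -/
def markovOp (M : MarkovSystem K N E) (f : K → ℝ≥0∞) : K → ℝ≥0∞ :=
  fun x => ∑' e : E, ENNReal.ofReal (M.p e x) * f (M.w e x)

/-- The adjoint operator `U*` acting on measures, `(U*ν)(B) = ∫ U(1_B) dν`. -/
def adjOp (M : MarkovSystem K N E) (ν : Measure K) : Measure K :=
  Measure.sum fun e : E =>
    Measure.map (M.w e) (ν.withDensity fun x => ENNReal.ofReal (M.p e x))

/-- `μ ∈ P(M)`: `μ` is an invariant Borel probability measure, `U*μ = μ`. -/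
def IsInvariantMeasure (M : MarkovSystem K N E) (μ : Measure K) : Prop :=
  IsProbabilityMeasure μ ∧ M.adjOp μ = μ

/-- The path space `Σ_G`: all coordinates lie in `E` and `i(σ_{n+1}) = t(σ_n)`. -/
def pathSpace (M : MarkovSystem K N E) : Set (CodeSpace E) :=
  {σ | ∀ n : ℤ, ∃ e e' : E, σ n = some e ∧ σ (n + 1) = some e' ∧ M.i e' = M.t e}

/-- `T_j = {σ ∈ Σ_G : t(σ_0) = j}`. -/
def Tset (M : MarkovSystem K N E) (j : N) : Set (CodeSpace E) :=
  {σ | σ ∈ M.pathSpace ∧ ∃ e : E, σ 0 = some e ∧ M.t e = j}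

/-- `w` extended to `Ē`, with `w_∞ = id`. -/
def wext (M : MarkovSystem K N E) : Option E → K → K := fun o => o.elim id M.w

/-- `p` extended to `Ē`, with `p_∞ = 0`. -/
def pext (M : MarkovSystem K N E) : Option E → K → ℝ := fun o => o.elim (fun _ => 0) M.p

/-- `i` extended to `Ē`, with `i(∞) = j₀`. -/
def iext (M : MarkovSystem K N E) (j0 : N) : Option E → N := fun o => o.elim j0 M.i

/-- `t` extended to `Ē`, with `t(∞) = j₀`. -/
def text (M : MarkovSystem K N E) (j0 : N) : Option E → N := fun o => o.elim j0 M.t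

/-- `iterW M σ n y = w_{σ_0} ∘ w_{σ_{-1}} ∘ ⋯ ∘ w_{σ_{-n}} (y)`. -/
def iterW (M : MarkovSystem K N E) (σ : CodeSpace E) : ℕ → K → K
  | 0, y => M.wext (σ 0) y
  | n + 1, y => M.iterW σ n (M.wext (σ (-(n + 1 : ℤ))) y)

/-- `orbit M j0 xp σ n = w_{σ_0} ∘ ⋯ ∘ w_{σ_{-n}} (x_{i(σ_{-n})})`. -/
def orbit (M : MarkovSystem K N E) (j0 : N) (xp : N → K) (σ : CodeSpace E) (n : ℕ) : K :=
  M.iterW σ n (xp (M.iext j0 (σ (-(n : ℤ)))))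

/-- `D`: the set of `σ ∈ Σ_G` for which `lim_{m → -∞} w_{σ_0} ∘ ⋯ ∘ w_{σ_m}(x_{i(σ_m)})` exists. -/
def codeDomain (M : MarkovSystem K N E) (j0 : N) (xp : N → K) : Set (CodeSpace E) :=
  {σ | σ ∈ M.pathSpace ∧ ∃ l : K, Tendsto (fun n : ℕ => M.orbit j0 xp σ n) atTop (𝓝 l)}

/-- The coding map `F`: the above limit on `D`, and `x_{t(σ_0)}` elsewhere. -/
def code (M : MarkovSystem K N E) (j0 : N) (xp : N → K) (σ : CodeSpace E) : K :=
  if h : σ ∈ M.codeDomain j0 xp then h.2.choose else xp (M.text j0 (σ 0))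

/-- `Λ ∈ E(M)`: `Λ` is a shift-invariant Borel probability measure with `Λ(D) = 1` and
`E_Λ(1_{_1[e]} | 𝓕) = p_e ∘ F` `Λ`-a.e. for every `e ∈ E` (an equilibrium state). -/
def IsEquilibrium (M : MarkovSystem K N E) (j0 : N) (xp : N → K)
    (Λ : Measure (CodeSpace E)) : Prop :=
  IsProbabilityMeasure Λ ∧ Measure.map (shiftMap E) Λ = Λ ∧
    Λ (M.codeDomain j0 xp) = 1 ∧
    ∀ e : E,
      (Λ[Set.indicator {σ : CodeSpace E | σ 1 = some e} (fun _ => (1 : ℝ)) | pastAlgebra E])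
        =ᵐ[Λ] fun σ => M.p e (M.code j0 xp σ)

/-- `pbar` is the family of continuous extensions `p̄_e` of `p_e|_{K_{i(e)}}` to the closure
of `K_{i(e)}`, extended further by zero on `K`. -/
def IsUCExtensionP (M : MarkovSystem K N E) (pbar : E → K → ℝ) : Prop :=
  ∀ e : E, ContinuousOn (pbar e) (closure (M.Kset (M.i e))) ∧
    (∀ x ∈ M.Kset (M.i e), pbar e x = M.p e x) ∧
    (∀ x, x ∉ closure (M.Kset (M.i e)) → pbar e x = 0)

/-- `wb` is a family of continuous extensions `w̄_e` of `w_e|_{K_{i(e)}}` to the closure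
of `K_{i(e)}`. -/
def IsUCExtensionW (M : MarkovSystem K N E) (wb : E → K → K) : Prop :=
  ∀ e : E, ContinuousOn (wb e) (closure (M.Kset (M.i e))) ∧
    (∀ x ∈ M.Kset (M.i e), wb e x = M.w e x)

/-- The Markov system is uniformly continuous: each `w_e|_{K_{i(e)}}` and `p_e|_{K_{i(e)}}`
is uniformly continuous. -/
def IsUniformlyContinuous (M : MarkovSystem K N E) : Prop :=
  ∀ e : E, UniformContinuousOn (M.w e) (M.Kset (M.i e)) ∧
    UniformContinuousOn (M.p e) (M.Kset (M.i e))

/-- `∂p_e = p̄_e · 1_{cl(K_{i(e)}) \ K_{i(e)}}`. -/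
def dp (M : MarkovSystem K N E) (pbar : E → K → ℝ) (e : E) : K → ℝ :=
  Set.indicator (closure (M.Kset (M.i e)) \ M.Kset (M.i e)) (pbar e)

/-- `Λ ∈ Ẽ(M)` (asymptotic state): shift-invariant probability with `Λ(D) = 1` and
`E_Λ(1_{_1[e]} | 𝓕) = (p̄_e ∘ F)·1_{T_{i(e)}}` `Λ`-a.e. for every `e`. -/
def IsAsymptotic (M : MarkovSystem K N E) (j0 : N) (xp : N → K) (pbar : E → K → ℝ)
    (Λ : Measure (CodeSpace E)) : Prop :=
  IsProbabilityMeasure Λ ∧ Measure.map (shiftMap E) Λ = Λ ∧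
    Λ (M.codeDomain j0 xp) = 1 ∧
    ∀ e : E,
      (Λ[Set.indicator {σ : CodeSpace E | σ 1 = some e} (fun _ => (1 : ℝ)) | pastAlgebra E])
        =ᵐ[Λ] Set.indicator (M.Tset (M.i e)) (fun σ => pbar e (M.code j0 xp σ))

/-- `Λ ∈ E_⊥(M)`: shift-invariant probability with `Λ(D) = 1` and
`E_Λ(1_{_1[e]} | 𝓕) = (∂p_e ∘ F)·1_{T_{i(e)}}` `Λ`-a.e. for every `e`. -/
def IsPerp (M : MarkovSystem K N E) (j0 : N) (xp : N → K) (pbar : E → K → ℝ)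
    (Λ : Measure (CodeSpace E)) : Prop :=
  IsProbabilityMeasure Λ ∧ Measure.map (shiftMap E) Λ = Λ ∧
    Λ (M.codeDomain j0 xp) = 1 ∧
    ∀ e : E,
      (Λ[Set.indicator {σ : CodeSpace E | σ 1 = some e} (fun _ => (1 : ℝ)) | pastAlgebra E])
        =ᵐ[Λ] Set.indicator (M.Tset (M.i e)) (fun σ => M.dp pbar e (M.code j0 xp σ))

/-- `G = ⋃_{k ≥ 0} ⋃_{j ∈ N} S^{-k}(F^{-1}(K_j) ∩ T_j)`. -/
def Gset (M : MarkovSystem K N E) (j0 : N) (xp : N → K) : Set (CodeSpace E) :=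
  ⋃ (k : ℕ) (j : N), (shiftMap E)^[k] ⁻¹' ((M.code j0 xp) ⁻¹' (M.Kset j) ∩ M.Tset j)

/-- `M` is non-degenerate: for every asymptotic state `Λ` there is `i ∈ N` with
`Λ(T_i ∩ F^{-1}(K_i)) > 0`. -/
def IsNonDegenerate (M : MarkovSystem K N E) (j0 : N) (xp : N → K) (pbar : E → K → ℝ) : Prop :=
  ∀ Λ : Measure (CodeSpace E), M.IsAsymptotic j0 xp pbar Λ →
    ∃ i : N, 0 < Λ (M.Tset i ∩ (M.code j0 xp) ⁻¹' (M.Kset i))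

/-- `M` is consistent: `F(Λ) ∈ P(M)` for every asymptotic state `Λ`. -/
def IsConsistent (M : MarkovSystem K N E) (j0 : N) (xp : N → K) (pbar : E → K → ℝ) : Prop :=
  ∀ Λ : Measure (CodeSpace E), M.IsAsymptotic j0 xp pbar Λ →
    M.IsInvariantMeasure (Measure.map (M.code j0 xp) Λ)

/-- `Rf = ∑_e ∂p_e · (f ∘ w̄_e)`. -/
def Rop (M : MarkovSystem K N E) (pbar : E → K → ℝ) (wb : E → K → K)
    (f : K → ℝ≥0∞) : K → ℝ≥0∞ :=
  fun x => ∑' e : E, ENNReal.ofReal (M.dp pbar e x) * f (wb e x)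

/-- `Ω = ⋂_{n ≥ 1} {R^n 1 ≥ 1}`. -/
def OmegaSet (M : MarkovSystem K N E) (pbar : E → K → ℝ) (wb : E → K → K) : Set K :=
  ⋂ n : ℕ, {x : K | 1 ≤ (M.Rop pbar wb)^[n + 1] (fun _ => 1) x}

/-- `ξ_j = ∑_{e, i(e) = j} sup_{x ∈ K_j} p_e(x)`. -/
def xi (M : MarkovSystem K N E) (j : N) : ℝ≥0∞ :=
  ∑' e : {e : E // M.i e = j}, ⨆ x ∈ M.Kset j, ENNReal.ofReal (M.p e.val x)

/-- `M` has a dominating Markov chain: `ξ_j < ∞` for all `j ∈ N`. -/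
def HasDominatingChain (M : MarkovSystem K N E) : Prop := ∀ j : N, M.xi j ≠ ⊤

/-- `ξ_j · q_{j j'} = ∑_{e, i(e) = j, t(e) = j'} sup_{x ∈ K_j} p_e(x)`. -/
def xiq (M : MarkovSystem K N E) (j j' : N) : ℝ≥0∞ :=
  ∑' e : {e : E // M.i e = j ∧ M.t e = j'}, ⨆ x ∈ M.Kset j, ENNReal.ofReal (M.p e.val x)

/-- `c = ∑_{j'} sup_j ξ_j q_{j j'}`. -/
def cConst (M : MarkovSystem K N E) : ℝ≥0∞ := ∑' j' : N, ⨆ j : N, M.xiq j j'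

/-- `α^{x_0}_n({j}) = (1/n) ∑_{k=1}^n ((U*)^k δ_{x_0})(K_j)`. -/
def alphaMeas (M : MarkovSystem K N E) (x0 : K) (n : ℕ) (j : N) : ℝ≥0∞ :=
  (n : ℝ≥0∞)⁻¹ * ∑ k ∈ Finset.range n, (M.adjOp^[k + 1] (Measure.dirac x0)) (M.Kset j)

/-- Condition (T) at `x_0`: the sequence `(α^{x_0}_n)_n` is uniformly tight. -/
def ConditionT (M : MarkovSystem K N E) (x0 : K) : Prop :=
  ∀ ε : ℝ, 0 < ε → ∃ V : Finset N,
    ∀ n : ℕ, (∑' j : {j : N // j ∉ V}, M.alphaMeas x0 (n + 1) j.val) < ENNReal.ofReal ε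

/-- `M` is contractive with contraction rate `a`:
`∑_{e, i(e) = j} p_e(x) d(w_e x, w_e y) ≤ a·d(x, y)` on each `K_j`. -/
def IsContractive (M : MarkovSystem K N E) (a : ℝ) : Prop :=
  ∀ j : N, ∀ x ∈ M.Kset j, ∀ y ∈ M.Kset j,
    (∑' e : {e : E // M.i e = j},
        ENNReal.ofReal (M.p e.val x * dist (M.w e.val x) (M.w e.val y)))
      ≤ ENNReal.ofReal (a * dist x y)

/-- `L(x) = ∑_j d(x, x_j)·1_{K_j}(x)`. -/
def Lfun (M : MarkovSystem K N E) (xp : N → K) : K → ℝ≥0∞ :=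
  fun x => ∑' j : N, Set.indicator (M.Kset j) (fun y => ENNReal.ofReal (dist y (xp j))) x

/-- `b = sup_j sup_{x ∈ K_j} ∑_{e, i(e) = j} p_e(x)·d(w_e(x_{i(e)}), x_{t(e)})`. -/
def bConst (M : MarkovSystem K N E) (xp : N → K) : ℝ≥0∞ :=
  ⨆ j : N, ⨆ x ∈ M.Kset j,
    ∑' e : {e : E // M.i e = j},
      ENNReal.ofReal (M.p e.val x * dist (M.w e.val (xp (M.i e.val))) (xp (M.t e.val)))

/-- `P^m_x` evaluated on a word: `p_{e_0}(x)·p_{e_1}(w_{e_0}x)·⋯`. -/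
def wordProb (M : MarkovSystem K N E) : List (Option E) → K → ℝ
  | [], _ => 1
  | o :: rest, x => M.pext o x * M.wordProb rest (M.wext o x)

/-- `Λ = Φ(μ)`: `Λ` is a shift-invariant Borel probability measure with
`Λ(_m[e_m, …, e_n]) = ∫ P^m_x(_m[e_m, …, e_n]) dμ(x)` for all cylinders with `m ≤ 0`. -/
def IsPhiOf (M : MarkovSystem K N E) (μ : Measure K) (Λ : Measure (CodeSpace E)) : Prop :=
  IsProbabilityMeasure Λ ∧ Measure.map (shiftMap E) Λ = Λ ∧
    ∀ m : ℤ, m ≤ 0 → ∀ es : List (Option E),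
      Λ (cylSetL m es) = ∫⁻ x, ENNReal.ofReal (M.wordProb es x) ∂μ

/-- The (negative of the) energy function: `-u(σ) = -log p_{σ_1}(F(σ))` on `D`
(`+∞` if `p_{σ_1}(F(σ)) = 0`) and `+∞` off `D`, valued in `[0, ∞]`. -/
def negEnergy (M : MarkovSystem K N E) (j0 : N) (xp : N → K) (σ : CodeSpace E) : ℝ≥0∞ :=
  if σ ∈ M.codeDomain j0 xp then
    (σ 1).elim ⊤ fun e =>
      if M.p e (M.code j0 xp σ) = 0 then ⊤
      else ENNReal.ofReal (-Real.log (M.p e (M.code j0 xp σ)))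
  else ⊤

/-- The free energy `h_S(Λ) + ∫ u dΛ`, as an extended real number. -/
def freeEnergy (M : MarkovSystem K N E) (j0 : N) (xp : N → K)
    (Λ : Measure (CodeSpace E)) : EReal :=
  (entropyS Λ : EReal) - ((∫⁻ σ, M.negEnergy j0 xp σ ∂Λ : ℝ≥0∞) : EReal)

/-- `Λ₀ ∈ E(u)`: `Λ₀` is a thermodynamic equilibrium state for the energy function `u`. -/
def IsEquilibriumForU (M : MarkovSystem K N E) (j0 : N) (xp : N → K)
    (Λ0 : Measure (CodeSpace E)) : Prop :=
  IsProbabilityMeasure Λ0 ∧ Measure.map (shiftMap E) Λ0 = Λ0 ∧ entropyS Λ0 ≠ ⊤ ∧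
    M.freeEnergy j0 xp Λ0 =
      sSup {r : EReal | ∃ Λ : Measure (CodeSpace E),
        IsProbabilityMeasure Λ ∧ Measure.map (shiftMap E) Λ = Λ ∧ entropyS Λ ≠ ⊤ ∧
          r = M.freeEnergy j0 xp Λ}

end MarkovSystem

end


/-!
Let `Λ ∈ Ẽ(M)` give measure zero to every `T_i ∩ F⁻¹(K_i)`. Then `F σ ∉ K_{i(e)}` whenever
`σ ∈ T_{i(e)}`, so the conditional probability of `σ₁ = e` given the past is at most
`∂p_e(F σ)`. Since `F(Sσ) = w̄_{σ₁}(F σ)` and `Λ` is shift-invariant, induction on `n` gives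
`R^n 1 ∘ F ≥ 1` almost surely: for a past event `A`,
`Λ(A) = ∑_e Λ(A ∩ {σ₁ = e}) ≤ ∫_A ∑_e ∂p_e(F) · R^n 1(w̄_e F) = ∫_A R^{n+1} 1 ∘ F`.
Hence `Λ(F⁻¹(Ω)) = 1`, which is impossible when `F⁻¹(Ω) = ∅`. The integrands are past-measurable
because `F` agrees `Λ`-a.e. with the limit of the orbits, each of which depends on finitely many
past coordinates.
-/
section CondExp

variable {α : Type*} {m m0 : MeasurableSpace α} {μ : Measure α} [IsFiniteMeasure μ]

theorem measure_inter_eq_setLIntegral_condExp_indicator (hm : m ≤ m0) {s A : Set α}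
    (hs : MeasurableSet s) (hA : MeasurableSet[m] A) :
    μ (s ∩ A) = ∫⁻ x in A, ENNReal.ofReal (μ[s.indicator (fun _ => (1 : ℝ)) | m] x) ∂μ := by
  have hnonneg : 0 ≤ᵐ[μ] μ[s.indicator (fun _ => (1 : ℝ)) | m] :=
    condExp_nonneg (.of_forall fun _ => Set.indicator_nonneg (fun _ _ => zero_le_one) _)
  rw [← ofReal_integral_eq_lintegral_ofReal integrable_condExp.integrableOn
      (ae_restrict_of_ae hnonneg),
    setIntegral_condExp hm ((integrable_const 1).indicator hs) hA,
    integral_indicator_const _ hs, smul_eq_mul, mul_one, ofReal_measureReal,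
    Measure.restrict_apply hs]

theorem ae_one_le_of_measure_le_setLIntegral (hm : m ≤ m0) {h : α → ℝ≥0∞}
    (hh : Measurable[m] h) (H : ∀ A, MeasurableSet[m] A → μ A ≤ ∫⁻ x in A, h x ∂μ) :
    ∀ᵐ x ∂μ, 1 ≤ h x := by
  refine ae_of_ae_trim hm (ae_le_of_forall_setLIntegral_le_of_sigmaFinite measurable_const
    fun A hA _ => ?_)
  rw [setLIntegral_trim hm hh hA, setLIntegral_const, one_mul,
    trim_measurableSet_eq hm hA]
  exact H A hA

theorem measure_inter_le_setLIntegral_mul_of_condExp_le (hm : m ≤ m0) {s A : Set α}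
    (hs : MeasurableSet s) (hA : MeasurableSet[m] A) {φ ψ : α → ℝ≥0∞}
    (hφ : Measurable[m] φ) (hφs : ∀ᵐ x ∂μ, x ∈ s → 1 ≤ φ x)
    (hψs : ∀ᵐ x ∂μ, ENNReal.ofReal (μ[s.indicator (fun _ => (1 : ℝ)) | m] x) ≤ ψ x) :
    μ (s ∩ A) ≤ ∫⁻ x in A, ψ x * φ x ∂μ := by
  set B := A ∩ {x | 1 ≤ φ x}
  have hB : MeasurableSet[m] B := hA.inter (hφ measurableSet_Ici)
  calc μ (s ∩ A) ≤ μ (s ∩ B) := by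
        refine measure_mono_ae ?_
        filter_upwards [hφs] with x hx ⟨hxs, hxA⟩
        exact ⟨hxs, hxA, hx hxs⟩
    _ = ∫⁻ x in B, ENNReal.ofReal (μ[s.indicator (fun _ => (1 : ℝ)) | m] x) ∂μ :=
        measure_inter_eq_setLIntegral_condExp_indicator hm hs hB
    _ ≤ ∫⁻ x in B, ψ x * φ x ∂μ := by
        refine setLIntegral_mono_ae' (hm _ hB) ?_
        filter_upwards [hψs] with x hx hxB
        exact hx.trans (le_mul_of_one_le_right' hxB.2)
    _ ≤ ∫⁻ x in A, ψ x * φ x ∂μ := lintegral_mono_set Set.inter_subset_left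

theorem ae_one_le_tsum_mul_of_condExp_le {ι : Type*} [Countable ι] (hm : m ≤ m0)
    {s : ι → Set α} (hs : ∀ i, MeasurableSet (s i)) (hcover : ∀ᵐ x ∂μ, ∃ i, x ∈ s i)
    {φ ψ : ι → α → ℝ≥0∞} (hφ : ∀ i, Measurable[m] (φ i)) (hψ : ∀ i, Measurable[m] (ψ i))
    (hφs : ∀ i, ∀ᵐ x ∂μ, x ∈ s i → 1 ≤ φ i x)
    (hψs : ∀ i, ∀ᵐ x ∂μ, ENNReal.ofReal (μ[(s i).indicator (fun _ => (1 : ℝ)) | m] x) ≤ ψ i x) :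
    ∀ᵐ x ∂μ, 1 ≤ ∑' i, ψ i x * φ i x := by
  have hsum : Measurable[m] fun x => ∑' i, ψ i x * φ i x := by
    let _ : MeasurableSpace α := m
    exact Measurable.tsum fun i => (hψ i).mul (hφ i)
  refine ae_one_le_of_measure_le_setLIntegral hm hsum fun A hA => ?_
  calc μ A ≤ μ (⋃ i, s i ∩ A) := by
        refine measure_mono_ae ?_
        filter_upwards [hcover] with x ⟨i, hi⟩ hxA
        exact Set.mem_iUnion.2 ⟨i, hi, hxA⟩
    _ ≤ ∑' i, μ (s i ∩ A) := measure_iUnion_le _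
    _ ≤ ∑' i, ∫⁻ x in A, ψ i x * φ i x ∂μ := ENNReal.tsum_le_tsum fun i =>
        measure_inter_le_setLIntegral_mul_of_condExp_le hm (hs i) hA (hφ i) (hφs i) (hψs i)
    _ = ∫⁻ x in A, ∑' i, ψ i x * φ i x ∂μ :=
        (lintegral_tsum fun i => (((hψ i).mul (hφ i)).mono hm le_rfl).aemeasurable).symm

end CondExp

section CodeSpace

variable {E : Type*}

theorem measurableSet_cylSetL (m : ℤ) (es : List (Option E)) : MeasurableSet (cylSetL m es) := by
  simp only [cylSetL, Set.ofPred_forall]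
  exact .iInter fun k => .iInter fun _ => measurable_pi_apply _ (measurableSet_singleton _)

theorem pastAlgebra_le : pastAlgebra E ≤ MeasurableSpace.pi := by
  refine MeasurableSpace.generateFrom_le ?_
  rintro A ⟨es, -, rfl⟩
  exact measurableSet_cylSetL _ _

theorem measurable_shiftMap : Measurable (shiftMap E) :=
  measurable_pi_lambda _ fun k => measurable_pi_apply (k + 1)

def pastWindow (n : ℕ) (σ : CodeSpace E) : Fin (n + 1) → Option E := fun k => σ (k - n)

theorem pastWindow_preimage_singleton (n : ℕ) (v : Fin (n + 1) → Option E) :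
    pastWindow n ⁻¹' {v} = cylSetL (1 - ((List.ofFn v).length : ℤ)) (List.ofFn v) := by
  ext σ
  simp only [Set.mem_preimage, Set.mem_singleton_iff, cylSetL, List.length_ofFn,
    List.get_ofFn, funext_iff, pastWindow]
  have hidx : ∀ k : ℕ, 1 - ((n + 1 : ℕ) : ℤ) + k = k - n := fun k => by push_cast; ring
  exact ⟨fun h k hk => hidx k ▸ h ⟨k, hk⟩, fun h k => hidx k ▸ h k k.isLt⟩

theorem measurable_pastWindow [Countable E] (n : ℕ) :
    Measurable[pastAlgebra E] (pastWindow n) := by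
  let _ := pastAlgebra E
  exact measurable_to_countable' fun v => pastWindow_preimage_singleton n v ▸
    MeasurableSpace.measurableSet_generateFrom ⟨List.ofFn v, by simp, rfl⟩

theorem Function.FactorsThrough.stronglyMeasurable_pastAlgebra [Countable E] {β : Type*}
    [TopologicalSpace β] {f : CodeSpace E → β} {n : ℕ}
    (hf : Function.FactorsThrough f (pastWindow n)) :
    StronglyMeasurable[pastAlgebra E] f := by
  let _ := pastAlgebra E
  have hfac : f = Function.extend (pastWindow n) f (fun _ => f fun _ => none) ∘ pastWindow n :=
    funext fun σ => (hf.extend_apply _ σ).symm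
  rw [hfac]
  exact (StronglyMeasurable.of_discrete (α := Fin (n + 1) → Option E) (β := β)).comp_measurable
    (measurable_pastWindow n)

end CodeSpace

namespace MarkovSystem

variable {K : Type*} [MetricSpace K] [MeasurableSpace K] {N E : Type*}
  (M : MarkovSystem K N E) (j0 : N) (xp : N → K)

theorem iterW_congr {σ τ : CodeSpace E} :
    ∀ {n : ℕ}, (∀ k ≤ n, σ (-(k : ℤ)) = τ (-(k : ℤ))) → M.iterW σ n = M.iterW τ n
  | 0, h => by
    funext y
    simp [iterW, by simpa using h 0 le_rfl]
  | n + 1, h => by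
    funext y
    have hn : σ (-((n : ℤ) + 1)) = τ (-((n : ℤ) + 1)) := by exact_mod_cast h (n + 1) le_rfl
    simp only [iterW, hn, iterW_congr fun k hk => h k (Nat.le_succ_of_le hk)]

theorem factorsThrough_orbit (n : ℕ) :
    Function.FactorsThrough (fun σ => M.orbit j0 xp σ n) (pastWindow n) := by
  intro σ τ h
  have hk : ∀ k ≤ n, σ (-(k : ℤ)) = τ (-(k : ℤ)) := fun k hk => by
    simpa [pastWindow, Nat.cast_sub hk] using congrFun h ⟨n - k, by omega⟩
  simp only [orbit, hk n le_rfl, M.iterW_congr hk]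

theorem stronglyMeasurable_orbit [Countable E] (n : ℕ) :
    StronglyMeasurable[pastAlgebra E] fun σ => M.orbit j0 xp σ n :=
  (M.factorsThrough_orbit j0 xp n).stronglyMeasurable_pastAlgebra

theorem measurableSet_pathSpace [Countable E] : MeasurableSet M.pathSpace := by
  simp only [pathSpace, Set.ofPred_forall]
  refine .iInter fun n => ?_
  have hpair : Measurable fun σ : CodeSpace E => (σ n, σ (n + 1)) := by fun_prop
  exact hpair (Set.to_countable {q : Option E × Option E |
      ∃ e e', q.1 = some e ∧ q.2 = some e' ∧ M.i e' = M.t e}).measurableSet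

theorem measurableSet_codeDomain [CompleteSpace K] [Countable E] :
    MeasurableSet (M.codeDomain j0 xp) :=
  M.measurableSet_pathSpace.inter <| StronglyMeasurable.measurableSet_exists_tendsto
    fun n => (M.stronglyMeasurable_orbit j0 xp n).mono pastAlgebra_le

theorem iterW_shiftMap (σ : CodeSpace E) :
    ∀ (n : ℕ) (y : K), M.iterW (shiftMap E σ) (n + 1) y = M.wext (σ 1) (M.iterW σ n y)
  | 0, y => by simp [iterW, shiftMap]
  | n + 1, y => by
    have hidx : shiftMap E σ (-((n + 1 : ℕ) + 1 : ℤ)) = σ (-((n : ℤ) + 1)) := by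
      simp only [shiftMap]; exact congrArg σ (by omega)
    rw [iterW, hidx, iterW_shiftMap σ n, iterW]

theorem orbit_shiftMap (σ : CodeSpace E) (n : ℕ) :
    M.orbit j0 xp (shiftMap E σ) (n + 1) = M.wext (σ 1) (M.orbit j0 xp σ n) := by
  have hidx : shiftMap E σ (-((n + 1 : ℕ) : ℤ)) = σ (-(n : ℤ)) := by
    simp only [shiftMap]; exact congrArg σ (by omega)
  rw [orbit, hidx, iterW_shiftMap, orbit]

theorem iterW_mem {σ : CodeSpace E} (hσ : σ ∈ M.pathSpace) {e₀ : E} (h₀ : σ 0 = some e₀) :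
    ∀ (n : ℕ) {e : E}, σ (-(n : ℤ)) = some e → ∀ y ∈ M.Kset (M.i e),
      M.iterW σ n y ∈ M.Kset (M.t e₀)
  | 0, e, he, y, hy => by
    obtain rfl : e = e₀ := Option.some_injective _ (by simpa [h₀] using he.symm)
    simpa [iterW, wext, h₀] using M.w_mapsTo e hy
  | n + 1, e, he, y, hy => by
    obtain ⟨e', e'', he', he'', hi⟩ := hσ (-((n + 1 : ℕ) : ℤ))
    obtain rfl : e' = e := Option.some_injective _ (he'.symm.trans he)
    have hnext : σ (-(n : ℤ)) = some e'' := by rw [← he'']; exact congrArg σ (by omega)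
    have hw : M.w e' y ∈ M.Kset (M.i e'') := hi ▸ M.w_mapsTo e' hy
    have hcur : σ (-((n : ℤ) + 1)) = some e' := by rw [← he']; exact congrArg σ (by omega)
    show M.iterW σ n (M.wext (σ (-((n : ℤ) + 1))) y) ∈ _
    rw [hcur]
    exact iterW_mem hσ h₀ n hnext _ hw

theorem orbit_mem (hxp : ∀ j, xp j ∈ M.Kset j) {σ : CodeSpace E} (hσ : σ ∈ M.pathSpace)
    (n : ℕ) {e₀ : E} (h₀ : σ 0 = some e₀) : M.orbit j0 xp σ n ∈ M.Kset (M.t e₀) := by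
  obtain ⟨e, -, he, -, -⟩ := hσ (-(n : ℤ))
  rw [orbit, he]
  exact M.iterW_mem hσ h₀ n he _ (hxp _)

theorem shiftMap_mem_pathSpace {σ : CodeSpace E} (hσ : σ ∈ M.pathSpace) :
    shiftMap E σ ∈ M.pathSpace :=
  fun n => hσ (n + 1)

theorem tendsto_orbit_code {σ : CodeSpace E} (hσ : σ ∈ M.codeDomain j0 xp) :
    Tendsto (fun n => M.orbit j0 xp σ n) atTop (𝓝 (M.code j0 xp σ)) := by
  rw [code, dif_pos hσ]
  exact hσ.2.choose_spec

theorem orbit_mem_Kset_i_of_apply_one (hxp : ∀ j, xp j ∈ M.Kset j) {σ : CodeSpace E}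
    (hσ : σ ∈ M.pathSpace) {e : E} (he : σ 1 = some e) (n : ℕ) :
    M.orbit j0 xp σ n ∈ M.Kset (M.i e) := by
  obtain ⟨e₀, e₁, h₀, h₁, hi⟩ := hσ 0
  obtain rfl : e₁ = e := Option.some_injective _ (h₁.symm.trans (by simpa using he))
  exact hi ▸ M.orbit_mem j0 xp hxp hσ n h₀

theorem code_mem_closure (hxp : ∀ j, xp j ∈ M.Kset j) {σ : CodeSpace E}
    (hσ : σ ∈ M.codeDomain j0 xp) {e : E} (he : σ 1 = some e) :
    M.code j0 xp σ ∈ closure (M.Kset (M.i e)) :=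
  mem_closure_of_tendsto (M.tendsto_orbit_code j0 xp hσ)
    (.of_forall (M.orbit_mem_Kset_i_of_apply_one j0 xp hxp hσ.1 he))

theorem tendsto_orbit_shiftMap (hxp : ∀ j, xp j ∈ M.Kset j) {wb : E → K → K}
    (hwb : M.IsUCExtensionW wb) {σ : CodeSpace E} (hσ : σ ∈ M.codeDomain j0 xp) {e : E}
    (he : σ 1 = some e) :
    Tendsto (fun n => M.orbit j0 xp (shiftMap E σ) n) atTop (𝓝 (wb e (M.code j0 xp σ))) := by
  have horbit := M.orbit_mem_Kset_i_of_apply_one j0 xp hxp hσ.1 he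
  have hshift : ∀ n, M.orbit j0 xp (shiftMap E σ) (n + 1) = wb e (M.orbit j0 xp σ n) :=
    fun n => by rw [orbit_shiftMap, he, (hwb e).2 _ (horbit n)]; rfl
  rw [← tendsto_add_atTop_iff_nat 1]
  simp only [hshift]
  exact ((hwb e).1 _ (M.code_mem_closure j0 xp hxp hσ he)).tendsto.comp
    (tendsto_nhdsWithin_iff.2 ⟨M.tendsto_orbit_code j0 xp hσ,
      .of_forall fun n => subset_closure (horbit n)⟩)

theorem shiftMap_mem_codeDomain (hxp : ∀ j, xp j ∈ M.Kset j) {wb : E → K → K}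
    (hwb : M.IsUCExtensionW wb) {σ : CodeSpace E} (hσ : σ ∈ M.codeDomain j0 xp) {e : E}
    (he : σ 1 = some e) : shiftMap E σ ∈ M.codeDomain j0 xp :=
  ⟨M.shiftMap_mem_pathSpace hσ.1, _, M.tendsto_orbit_shiftMap j0 xp hxp hwb hσ he⟩

theorem code_shiftMap (hxp : ∀ j, xp j ∈ M.Kset j) {wb : E → K → K}
    (hwb : M.IsUCExtensionW wb) {σ : CodeSpace E} (hσ : σ ∈ M.codeDomain j0 xp) {e : E}
    (he : σ 1 = some e) : M.code j0 xp (shiftMap E σ) = wb e (M.code j0 xp σ) :=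
  tendsto_nhds_unique (M.tendsto_orbit_code j0 xp (M.shiftMap_mem_codeDomain j0 xp hxp hwb hσ he))
    (M.tendsto_orbit_shiftMap j0 xp hxp hwb hσ he)

variable {pbar : E → K → ℝ} {wb : E → K → K}

/-- A Borel version of `w̄_e`, which agrees with it wherever `∂p_e` can be nonzero. -/
noncomputable def wbOnClosure (wb : E → K → K) (e : E) : K → K :=
  (closure (M.Kset (M.i e))).piecewise (wb e) id

theorem measurable_wbOnClosure [BorelSpace K] (hwb : M.IsUCExtensionW wb) (e : E) :
    Measurable (M.wbOnClosure wb e) :=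
  (hwb e).1.measurable_piecewise continuousOn_id isClosed_closure.measurableSet

theorem measurable_dp [BorelSpace K] (hpbar : M.IsUCExtensionP pbar) (e : E) :
    Measurable (M.dp pbar e) := by
  rw [dp, ← Set.piecewise_eq_indicator]
  exact ((hpbar e).1.mono Set.sdiff_subset).measurable_piecewise continuousOn_const
    (isClosed_closure.measurableSet.diff (M.Kset_measurable _))

theorem Rop_eq_tsum_wbOnClosure (f : K → ℝ≥0∞) (x : K) :
    M.Rop pbar wb f x = ∑' e, ENNReal.ofReal (M.dp pbar e x) * f (M.wbOnClosure wb e x) := by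
  refine tsum_congr fun e => ?_
  by_cases hx : x ∈ closure (M.Kset (M.i e))
  · rw [wbOnClosure, Set.piecewise_eq_of_mem _ _ _ hx]
  · simp [dp, hx]

theorem measurable_Rop_iterate [BorelSpace K] [Countable E] (hpbar : M.IsUCExtensionP pbar)
    (hwb : M.IsUCExtensionW wb) (n : ℕ) : Measurable ((M.Rop pbar wb)^[n] fun _ => 1) := by
  induction n with
  | zero => exact measurable_const
  | succ n ih =>
    rw [Function.iterate_succ', Function.comp_apply, funext (M.Rop_eq_tsum_wbOnClosure _)]
    exact Measurable.tsum fun e => (ENNReal.measurable_ofReal.comp (M.measurable_dp hpbar e)).mul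
      (ih.comp (M.measurable_wbOnClosure hwb e))

theorem dp_eq_of_notMem (hpbar : M.IsUCExtensionP pbar) {e : E} {x : K}
    (hx : x ∉ M.Kset (M.i e)) : M.dp pbar e x = pbar e x := by
  by_cases hcl : x ∈ closure (M.Kset (M.i e))
  · exact Set.indicator_of_mem (Set.mem_sdiff_of_mem hcl hx) _
  · rw [(hpbar e).2.2 x hcl]
    exact Set.indicator_of_notMem (fun h => hcl h.1) _

theorem ofReal_indicator_Tset_le_dp (hpbar : M.IsUCExtensionP pbar) {e : E}
    {σ : CodeSpace E} (hσ : σ ∉ M.Tset (M.i e) ∩ M.code j0 xp ⁻¹' M.Kset (M.i e)) :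
    ENNReal.ofReal ((M.Tset (M.i e)).indicator (fun τ => pbar e (M.code j0 xp τ)) σ) ≤
      ENNReal.ofReal (M.dp pbar e (M.code j0 xp σ)) := by
  by_cases hT : σ ∈ M.Tset (M.i e)
  · rw [Set.indicator_of_mem hT, M.dp_eq_of_notMem hpbar fun hK => hσ ⟨hT, hK⟩]
  · simp [Set.indicator_of_notMem hT]

/-- Unlike `F`, whose domain `D` involves future coordinates, this limit is past-measurable. -/
noncomputable def pastCode [Nonempty K] (σ : CodeSpace E) : K :=
  limUnder atTop fun n => M.orbit j0 xp σ n

theorem measurable_pastCode [Nonempty K] [CompleteSpace K] [BorelSpace K] [Countable E] :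
    Measurable[pastAlgebra E] (M.pastCode j0 xp) := by
  let _ := pastAlgebra E
  exact (StronglyMeasurable.limUnder fun n => M.stronglyMeasurable_orbit j0 xp n).measurable

theorem pastCode_eq_code [Nonempty K] {σ : CodeSpace E} (hσ : σ ∈ M.codeDomain j0 xp) :
    M.pastCode j0 xp σ = M.code j0 xp σ :=
  (M.tendsto_orbit_code j0 xp hσ).limUnder_eq

theorem ae_one_le_Rop_iterate_pastCode [Nonempty K] [CompleteSpace K] [BorelSpace K]
    [Countable E] (hxp : ∀ j, xp j ∈ M.Kset j) (hpbar : M.IsUCExtensionP pbar)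
    (hwb : M.IsUCExtensionW wb) {Λ : Measure (CodeSpace E)} [IsFiniteMeasure Λ]
    (hinv : Λ.map (shiftMap E) = Λ) (hD : ∀ᵐ σ ∂Λ, σ ∈ M.codeDomain j0 xp)
    (hce : ∀ e, ∀ᵐ σ ∂Λ,
      ENNReal.ofReal ((Λ[{τ : CodeSpace E | τ 1 = some e}.indicator (fun _ => (1 : ℝ)) |
        pastAlgebra E]) σ) ≤ ENNReal.ofReal (M.dp pbar e (M.code j0 xp σ)))
    (n : ℕ) : ∀ᵐ σ ∂Λ, 1 ≤ (M.Rop pbar wb)^[n] (fun _ => 1) (M.pastCode j0 xp σ) := by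
  have hg := M.measurable_pastCode j0 xp
  have hgF : ∀ᵐ σ ∂Λ, M.pastCode j0 xp σ = M.code j0 xp σ :=
    hD.mono fun _ => M.pastCode_eq_code j0 xp
  have hshift {p : CodeSpace E → Prop} (h : ∀ᵐ σ ∂Λ, p σ) : ∀ᵐ σ ∂Λ, p (shiftMap E σ) :=
    ae_of_ae_map measurable_shiftMap.aemeasurable (hinv.symm ▸ h)
  induction n with
  | zero => exact .of_forall fun _ => le_rfl
  | succ n ih =>
    have hstep := ae_one_le_tsum_mul_of_condExp_le pastAlgebra_le
      (s := fun e => {σ : CodeSpace E | σ 1 = some e})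
      (φ := fun e σ => (M.Rop pbar wb)^[n] (fun _ => 1) (M.wbOnClosure wb e (M.pastCode j0 xp σ)))
      (ψ := fun e σ => ENNReal.ofReal (M.dp pbar e (M.pastCode j0 xp σ)))
      (fun e => measurable_pi_apply 1 (measurableSet_singleton _))
      (hD.mono fun σ hσ => by
        obtain ⟨-, e, -, he, -⟩ := hσ.1 0
        exact ⟨e, by simpa using he⟩)
      (fun e => (M.measurable_Rop_iterate hpbar hwb n).comp
        ((M.measurable_wbOnClosure hwb e).comp hg))
      (fun e => ENNReal.measurable_ofReal.comp ((M.measurable_dp hpbar e).comp hg))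
      (fun e => by
        filter_upwards [hD, hgF, hshift hgF, hshift ih] with σ hσ hgσ hgSσ hRSσ he
        rwa [hgσ, wbOnClosure, Set.piecewise_eq_of_mem _ _ _
          (M.code_mem_closure j0 xp hxp hσ he), ← M.code_shiftMap j0 xp hxp hwb hσ he,
          ← hgSσ])
      (fun e => by
        filter_upwards [hce e, hgF] with σ hσ hgσ
        rwa [hgσ])
    filter_upwards [hstep] with σ hσ
    rwa [Function.iterate_succ_apply', M.Rop_eq_tsum_wbOnClosure]

theorem ae_code_mem_OmegaSet [CompleteSpace K] [BorelSpace K] [Countable E]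
    (hxp : ∀ j, xp j ∈ M.Kset j) (hpbar : M.IsUCExtensionP pbar) (hwb : M.IsUCExtensionW wb)
    {Λ : Measure (CodeSpace E)} [IsFiniteMeasure Λ] (hinv : Λ.map (shiftMap E) = Λ)
    (hD : ∀ᵐ σ ∂Λ, σ ∈ M.codeDomain j0 xp)
    (hce : ∀ e, ∀ᵐ σ ∂Λ,
      ENNReal.ofReal ((Λ[{τ : CodeSpace E | τ 1 = some e}.indicator (fun _ => (1 : ℝ)) |
        pastAlgebra E]) σ) ≤ ENNReal.ofReal (M.dp pbar e (M.code j0 xp σ))) :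
    ∀ᵐ σ ∂Λ, M.code j0 xp σ ∈ M.OmegaSet pbar wb := by
  have : Nonempty K := ⟨xp j0⟩
  have hR n := M.ae_one_le_Rop_iterate_pastCode j0 xp hxp hpbar hwb hinv hD hce n
  filter_upwards [ae_all_iff.2 fun n => hR (n + 1), hD] with σ hσ hσD
  exact Set.mem_iInter.2 fun n => M.pastCode_eq_code j0 xp hσD ▸ hσ n

end MarkovSystem

variable {K : Type*} [MetricSpace K] [CompleteSpace K] [MeasurableSpace K] [BorelSpace K]
  {N E : Type*} [Countable N] [Countable E]

theorem nondegenerate_of_code_preimage_Omega_empty_general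
    (M : MarkovSystem K N E) (j0 : N) (xp : N → K) (hxp : ∀ j, xp j ∈ M.Kset j)
    (pbar : E → K → ℝ) (hpbar : M.IsUCExtensionP pbar)
    (wb : E → K → K) (hwb : M.IsUCExtensionW wb)
    (hempty : (M.code j0 xp) ⁻¹' (M.OmegaSet pbar wb) = ∅) :
    M.IsNonDegenerate j0 xp pbar := by
  rintro Λ ⟨_, hinv, hD, hce⟩
  by_contra! hdeg
  have hnull : ∀ᵐ σ ∂Λ, ∀ i, σ ∉ M.Tset i ∩ M.code j0 xp ⁻¹' M.Kset i :=
    ae_all_iff.2 fun i => measure_eq_zero_iff_ae_notMem.1 (nonpos_iff_eq_zero.1 (hdeg i))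
  have hD_ae := (mem_ae_iff_prob_eq_one (M.measurableSet_codeDomain j0 xp)).2 hD
  have hΩ := M.ae_code_mem_OmegaSet j0 xp hxp hpbar hwb hinv hD_ae fun e => by
    filter_upwards [hce e, hnull] with σ hσ hσT
    rw [hσ]
    exact M.ofReal_indicator_Tset_le_dp j0 xp hpbar (hσT _)
  obtain ⟨σ, hσ⟩ := hΩ.exists
  exact (hempty ▸ hσ : σ ∈ (∅ : Set (CodeSpace E)))

/-- If `M` is uniformly continuous and `F⁻¹(Ω) = ∅`, then `M` is
non-degenerate. -/
theorem nondegenerate_of_code_preimage_Omega_empty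
    (M : MarkovSystem K N E) (j0 : N) (xp : N → K) (hxp : ∀ j, xp j ∈ M.Kset j)
    (huc : M.IsUniformlyContinuous)
    (pbar : E → K → ℝ) (hpbar : M.IsUCExtensionP pbar)
    (wb : E → K → K) (hwb : M.IsUCExtensionW wb)
    (hempty : (M.code j0 xp) ⁻¹' (M.OmegaSet pbar wb) = ∅) :
    M.IsNonDegenerate j0 xp pbar :=
  nondegenerate_of_code_preimage_Omega_empty_general M j0 xp hxp pbar hpbar wb hwb hempty
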